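/- For κ = 1, the infimum over x ∈ (1,∞) of h_1(x) = ln(Γ(x))/(x-1) equals -γ, and this infimum is not attained (it equals the limit as x → 1⁺). -/

import Mathlib

/-!
Since `Γ 1 = 1`, `log Γ x / (x - 1)` is the secant slope of `log Γ` from `1` to `x`. The function
`log Γ` is strictly convex on `(0, ∞)` with derivative `-γ` at `1`, so these slopes lie strictly
above the tangent slope `-γ` and tend to it as `x → 1⁺`.
-/

open Real Filter Set Topology

theorem isGLB_image_of_tendsto {α β : Type*} [TopologicalSpace β] [Preorder β]
    [ClosedIciTopology β] {g : α → β} {s : Set α} {l : Filter α} [l.NeBot] {b : β}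
    (hs : s ∈ l) (hb : ∀ x ∈ s, b ≤ g x) (hg : Tendsto g l (𝓝 b)) :
    IsGLB (g '' s) b :=
  ⟨forall_mem_image.2 hb, fun _ hc =>
    ge_of_tendsto hg (mem_of_superset hs fun _ hx => hc (mem_image_of_mem g hx))⟩

namespace Real

/-- `log Γ x = log Γ (x + 1) - log x`: a convex function plus a strictly convex one. -/
theorem strictConvexOn_log_Gamma : StrictConvexOn ℝ (Ioi 0) (log ∘ Gamma) := by
  have hshift : ConvexOn ℝ (Ioi 0) (fun x => log (Gamma (x + 1))) :=
    (convexOn_log_Gamma.translate_left 1).subset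
      (fun x (hx : 0 < x) => show 0 < 1 + x by linarith) (convex_Ioi 0)
  refine (hshift.add_strictConvexOn strictConcaveOn_log_Ioi.neg).congr fun x (hx : 0 < x) => ?_
  simp [Gamma_add_one hx.ne', log_mul hx.ne' (Gamma_pos_of_pos hx).ne']

theorem hasDerivAt_log_Gamma_one : HasDerivAt (log ∘ Gamma) (-eulerMascheroniConstant) 1 := by
  simpa [Gamma_one, Function.comp_def] using hasDerivAt_Gamma_one.log (by simp [Gamma_one])

end Real

theorem h_one_inf_eq_neg_gamma :
    IsGLB ((fun x => Real.log (Real.Gamma x) / (x - 1)) '' Set.Ioi 1)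
      (-Real.eulerMascheroniConstant) ∧
    (-Real.eulerMascheroniConstant) ∉
      ((fun x => Real.log (Real.Gamma x) / (x - 1)) '' Set.Ioi 1) ∧
    Tendsto (fun x => Real.log (Real.Gamma x) / (x - 1))
      (nhdsWithin 1 (Set.Ioi 1)) (nhds (-Real.eulerMascheroniConstant)) := by
  have hslope : (fun x => log (Gamma x) / (x - 1)) = slope (log ∘ Gamma) 1 := by
    ext x
    simp [slope_def_field, Gamma_one]
  have hlt : ∀ x ∈ Ioi (1 : ℝ), -eulerMascheroniConstant < slope (log ∘ Gamma) 1 x :=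
    fun x hx => strictConvexOn_log_Gamma.lt_slope_of_hasDerivAt (mem_Ioi.2 one_pos)
      (mem_Ioi.2 (one_pos.trans hx)) hx hasDerivAt_log_Gamma_one
  have hlim : Tendsto (slope (log ∘ Gamma) 1) (𝓝[>] 1) (𝓝 (-eulerMascheroniConstant)) :=
    (hasDerivAt_iff_tendsto_slope_left_right.1 hasDerivAt_log_Gamma_one).2
  rw [hslope]
  refine ⟨isGLB_image_of_tendsto self_mem_nhdsWithin (fun x hx => (hlt x hx).le) hlim, ?_, hlim⟩
  rintro ⟨x, hx, hx_eq⟩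
  exact (hlt x hx).ne' hx_eq
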